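/- Let G = (V,(c_{xy})) be a finite connected weighted graph, α̂ positive site weights, and k ≥ 2. For every configuration η ∈ Ξ_k and every time t > 0, the probability that the ε⁻¹-accelerated SIP sits in the absorbing set Ω_k at time t tends to one: lim_{ε→0⁺} (e^{t ε^{-1} L_{G, ε·α̂, k}} 1_{Ω_k})(η) = 1, where 1_{Ω_k} is the indicator function of Ω_k and the exponential is the matrix exponential of the generator on the finite-dimensional space ℝ^{Ξ_k}. -/

import Mathlib

open scoped BigOperators Classical

noncomputable section

/-- The configuration space of `k` particles on the finite site set `V`. -/
def Config (V : Type*) [Fintype V] (k : ℕ) : Type _ :=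
  {η : V → ℕ // ∑ x, η x = k}

namespace Config

variable {V : Type*} [Fintype V] [DecidableEq V] {k : ℕ}

lemma apply_le (η : Config V k) (x : V) : η.1 x ≤ k := by
  have h := Finset.single_le_sum (f := η.1) (fun i _ => Nat.zero_le _) (Finset.mem_univ x)
  simpa [η.2] using h

instance instFintype : Fintype (Config V k) :=
  Fintype.ofInjective
    (fun η : Config V k => (fun x => (⟨η.1 x, Nat.lt_succ_of_le (η.apply_le x)⟩ : Fin (k+1))))
    (fun a b hab => Subtype.ext (funext fun x => congrArg Fin.val (congrFun hab x)))

/-- The configuration `η - δ_x + δ_y` (move a particle from `x` to `y`);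
by convention it is `η` itself when `η` has no particle at `x`. -/
def move (η : Config V k) (x y : V) : Config V k :=
  if h : η.1 x = 0 then η else
    ⟨fun z => η.1 z - (if z = x then 1 else 0) + (if z = y then 1 else 0), by
      have hle : ∀ z : V, (if z = x then 1 else 0) ≤ η.1 z := fun z => by
        by_cases hz : z = x
        · simpa [hz] using Nat.one_le_iff_ne_zero.2 h
        · simp [hz]
      have cast_term : ∀ z : V,
          ((η.1 z - (if z = x then 1 else 0) + (if z = y then 1 else 0) : ℕ) : ℤ)
            = (η.1 z : ℤ) - (if z = x then 1 else 0) + (if z = y then 1 else 0) := by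
        intro z
        rw [Nat.cast_add, Nat.cast_sub (hle z)]
        by_cases hz : z = x <;> by_cases hz' : z = y <;> simp [hz, hz']
      have key : ((∑ z, (η.1 z - (if z = x then 1 else 0) + (if z = y then 1 else 0)) : ℕ) : ℤ)
          = (k : ℤ) := by
        rw [Nat.cast_sum]
        rw [Finset.sum_congr rfl (fun z _ => cast_term z)]
        rw [Finset.sum_add_distrib, Finset.sum_sub_distrib]
        have h1 : (∑ z, (η.1 z : ℤ)) = (k : ℤ) := by
          rw [← Nat.cast_sum, η.2]
        rw [h1]
        simp
      exact_mod_cast key⟩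

/-- The configuration `η + δ_x`. -/
def addOne (η : Config V k) (x : V) : Config V (k + 1) :=
  ⟨fun z => η.1 z + (if z = x then 1 else 0), by
    rw [Finset.sum_add_distrib, η.2]
    simp⟩

end Config

section Defs

variable {V : Type*} [Fintype V] [DecidableEq V]

/-- The configuration with `k` particles stacked at `x`. -/
def stackConfig (V : Type*) [Fintype V] [DecidableEq V] (k : ℕ) (x : V) : Config V k :=
  ⟨fun z => if z = x then k else 0, by simp⟩

/-- Normalization constant `Z_{α,k}`. -/
def sipZ (α : V → ℝ) (k : ℕ) : ℝ :=
  Real.Gamma ((∑ x, α x) + k) / (Real.Gamma (∑ x, α x) * (Nat.factorial k))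

/-- The reversible (Dirichlet-multinomial) measure `μ_{α,k}` of SIP. -/
def sipMeasure (α : V → ℝ) {k : ℕ} (η : Config V k) : ℝ :=
  (sipZ α k)⁻¹ * ∏ x, Real.Gamma (α x + η.1 x) / (Real.Gamma (α x) * (Nat.factorial (η.1 x)))

/-- The Dirichlet form of `SIP_k(G, α)`. -/
def dirichletForm (c : V → V → ℝ) (α : V → ℝ) {k : ℕ} (f : Config V k → ℝ) : ℝ :=
  (1 / 2) * ∑ η : Config V k, ∑ x, ∑ y,
    sipMeasure α η * (c x y * η.1 x * (α y + η.1 y) * (f (η.move x y) - f η) ^ 2)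

/-- Mean of `f` under `μ_{α,k}`. -/
def sipMean (α : V → ℝ) {k : ℕ} (f : Config V k → ℝ) : ℝ :=
  ∑ η : Config V k, sipMeasure α η * f η

/-- Variance of `f` under `μ_{α,k}`. -/
def sipVar (α : V → ℝ) {k : ℕ} (f : Config V k → ℝ) : ℝ :=
  ∑ η : Config V k, sipMeasure α η * (f η - sipMean α f) ^ 2

/-- Squared `L²(μ_{α,k})`-norm of `f`. -/
def sipNormSq (α : V → ℝ) {k : ℕ} (f : Config V k → ℝ) : ℝ :=
  ∑ η : Config V k, sipMeasure α η * (f η) ^ 2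

/-- The spectral gap `gap_k(G,α)` of the `k`-particle SIP. -/
def sipGap (c : V → V → ℝ) (α : V → ℝ) (k : ℕ) : ℝ :=
  sInf {r : ℝ | ∃ f : Config V k → ℝ, (∃ η ζ : Config V k, f η ≠ f ζ) ∧
    r = dirichletForm c α f / sipVar α f}

/-- `gap_SIP(G,α) = inf_{k ≥ 2} gap_k(G,α)`. -/
def sipGapInf (c : V → V → ℝ) (α : V → ℝ) : ℝ :=
  sInf {r : ℝ | ∃ k : ℕ, 2 ≤ k ∧ r = sipGap c α k}

/-- The simple graph underlying a symmetric family of conductances. -/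
def graphOf (c : V → V → ℝ) : SimpleGraph V where
  Adj x y := x ≠ y ∧ (0 < c x y ∨ 0 < c y x)
  symm := ⟨fun x y h => ⟨h.1.symm, h.2.symm⟩⟩
  loopless := ⟨fun x h => h.1 rfl⟩

/-- The diameter of the weighted graph: maximal graph distance between two sites. -/
def graphDiam (c : V → V → ℝ) : ℕ :=
  Finset.univ.sup (fun p : V × V => (graphOf c).dist p.1 p.2)

/-- The minimal positive conductance. -/
def cMin (c : V → V → ℝ) : ℝ :=
  sInf {r : ℝ | 0 < r ∧ ∃ x y, c x y = r}

/-- Minimal site weight. -/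
def alphaMin (α : V → ℝ) : ℝ := sInf (Set.range α)

/-- Maximal site weight. -/
def alphaMax (α : V → ℝ) : ℝ := sSup (Set.range α)

/-- Conductances of the complete graph on `V`. -/
def completeCond (V : Type*) [DecidableEq V] : V → V → ℝ :=
  fun x y => if x = y then 0 else 1

/-- The generator matrix of `SIP_k(G,α)` acting on `ℝ^{Ξ_k}` by `mulVec`. -/
def sipMatrix (c : V → V → ℝ) (α : V → ℝ) (k : ℕ) : Matrix (Config V k) (Config V k) ℝ :=
  fun η ζ => ∑ x, ∑ y, c x y * η.1 x * (α y + η.1 y) *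
    ((if η.move x y = ζ then 1 else 0) - (if ζ = η then 1 else 0))

/-- The generator matrix `A_{β,k}` of `k` independent random walks. -/
def rwPartMatrix (c : V → V → ℝ) (β : V → ℝ) (k : ℕ) : Matrix (Config V k) (Config V k) ℝ :=
  fun η ζ => ∑ x, ∑ y, c x y * η.1 x * β y *
    ((if η.move x y = ζ then 1 else 0) - (if ζ = η then 1 else 0))

/-- The generator matrix `B_k` of the pure interaction (fast) dynamics. -/
def clumpMatrix (c : V → V → ℝ) (k : ℕ) : Matrix (Config V k) (Config V k) ℝ :=
  fun η ζ => ∑ x, ∑ y, c x y * η.1 x * η.1 y *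
    ((if η.move x y = ζ then 1 else 0) - (if ζ = η then 1 else 0))

/-- The generator matrix of the purely absorbing (killed) SIP. -/
def killedMatrix (c : V → V → ℝ) (α ω : V → ℝ) (k : ℕ) :
    Matrix (Config V k) (Config V k) ℝ :=
  fun η ζ => sipMatrix c α k η ζ - (if ζ = η then ∑ x, ω x * η.1 x else 0)

/-- `η ∈ Ω_k`: absorbing configurations for the fast dynamics. -/
def inOmega (c : V → V → ℝ) {k : ℕ} (η : Config V k) : Prop :=
  ∀ x y, c x y * η.1 x * η.1 y = 0

/-- The number of occupied sites (stacks) of a configuration. -/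
def numStacks {k : ℕ} (η : Config V k) : ℕ :=
  (Finset.univ.filter fun x => 0 < η.1 x).card

/-- Jump rates of `k` independent random walks: `r^A(η,ζ)`. -/
def rateA (c : V → V → ℝ) (β : V → ℝ) {k : ℕ} (η ζ : Config V k) : ℝ :=
  ∑ x, ∑ y, if η.1 x ≠ 0 ∧ η.move x y = ζ then c x y * η.1 x * β y else 0

/-- Metastable jump rates `r^M(η,ξ) = Σ_ζ r^A(η,ζ) h_ξ(ζ)`, given absorption
probabilities `h`. -/
def rateM (c : V → V → ℝ) (β : V → ℝ) {k : ℕ} (h : Config V k → Config V k → ℝ)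
    (η ξ : Config V k) : ℝ :=
  ∑ ζ, rateA c β η ζ * h ξ ζ

/-- The metastable generator on `Ω_k`, given absorption probabilities `h`. -/
def metaGen (c : V → V → ℝ) (β : V → ℝ) {k : ℕ} (h : Config V k → Config V k → ℝ)
    (g : Config V k → ℝ) (η : Config V k) : ℝ :=
  ∑ ξ, if inOmega c ξ ∧ ξ ≠ η then rateM c β h η ξ * (g ξ - g η) else 0

/-- The (restricted) annihilation operator `â_{k+1} g (η) = Σ_x η_x g(η - δ_x)`. -/
def annihilate {k : ℕ} (g : Config V k → ℝ) (η : Config V (k + 1)) : ℝ :=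
  ∑ x, ∑ ξ : Config V k, if ξ.addOne x = η then (η.1 x : ℝ) * g ξ else 0

/-- The SIP generator as an operator on functions. -/
def sipGen (c : V → V → ℝ) (α : V → ℝ) {k : ℕ} (f : Config V k → ℝ) (η : Config V k) : ℝ :=
  ∑ x, ∑ y, c x y * η.1 x * (α y + η.1 y) * (f (η.move x y) - f η)

/-- The purely absorbing (killed) SIP generator. -/
def killedGen (c : V → V → ℝ) (α ω : V → ℝ) {k : ℕ} (f : Config V k → ℝ)
    (η : Config V k) : ℝ :=
  sipGen c α f η - f η * ∑ x, ω x * η.1 x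

/-- Spectral gap of the killed `k`-particle SIP (Rayleigh quotient infimum). -/
def killedGap (c : V → V → ℝ) (α ω : V → ℝ) (k : ℕ) : ℝ :=
  sInf {r : ℝ | ∃ f : Config V k → ℝ, f ≠ 0 ∧
    r = (∑ η, sipMeasure α η * f η * (-(killedGen c α ω f η))) / sipNormSq α f}

/-- `λ_{k,k}(β)`: the variational bottom eigenvalue of `k` independent walks killed
upon two particles becoming adjacent. -/
def lamLevel (c : V → V → ℝ) (β : V → ℝ) (k : ℕ) : ℝ :=
  sInf {r : ℝ | ∃ f : Config V k → ℝ, f ≠ 0 ∧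
    (∀ η : Config V k, ¬(inOmega c η ∧ numStacks η = k) → f η = 0) ∧
    r = dirichletForm c β f / sipNormSq β f}


/-- The symmetrizing measure `ς_{β,k,m}` on stack configurations. -/
def stackMeasure (β : V → ℝ) {k : ℕ} (η : Config V k) : ℝ :=
  ∏ x, if 0 < η.1 x then β x / η.1 x else 1

/-- The lookdown generator of the SIP with killing, on labeled configurations. -/
def lookdownGen (c : V → V → ℝ) (α ω : V → ℝ) (k : ℕ) (φ : (Fin k → V) → ℝ)
    (v : Fin k → V) : ℝ :=
  (∑ i : Fin k, ∑ x, ∑ y, c x y * (if x = v i then 1 else 0) *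
      (α y + 2 * ∑ j : Fin k, (if (j : ℕ) < (i : ℕ) ∧ v j = y then 1 else 0)) *
      (φ (Function.update v i y) - φ v))
    - φ v * ∑ i, ω (v i)

/-- The unlabeling map `Φ_k` from labeled to unlabeled configurations. -/
def unlabel {k : ℕ} (v : Fin k → V) : Config V k :=
  ⟨fun z => (Finset.univ.filter fun i => v i = z).card, by
    have h := Finset.card_eq_sum_card_fiberwise
      (f := v) (s := Finset.univ) (t := Finset.univ) (fun i _ => Finset.mem_univ _)
    simpa using h.symm⟩

/-- The symmetrization operator `S_k`. -/
def symmetrize (k : ℕ) (φ : (Fin k → V) → ℝ) (v : Fin k → V) : ℝ :=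
  (1 / (Nat.factorial k : ℝ)) * ∑ σ : Equiv.Perm (Fin k), φ (fun i => v (σ i))

/-- `η + δ_x` on the full configuration space `ℕ^V`. -/
def addFn (η : V → ℕ) (x : V) : V → ℕ := fun z => η z + (if z = x then 1 else 0)

/-- `η - δ_x` on the full configuration space (truncated subtraction). -/
def remFn (η : V → ℕ) (x : V) : V → ℕ := fun z => η z - (if z = x then 1 else 0)

/-- `η - δ_x + δ_y` on the full configuration space; `η` itself when `η x = 0`. -/
def moveFn (η : V → ℕ) (x y : V) : V → ℕ :=
  if η x = 0 then η else fun z => η z - (if z = x then 1 else 0) + (if z = y then 1 else 0)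

/-- The generator of the non-conservative (open) SIP. -/
def openGen (c : V → V → ℝ) (α ω θ : V → ℝ) (f : (V → ℕ) → ℝ) (η : V → ℕ) : ℝ :=
  (∑ x, ∑ y, c x y * η x * (α y + η y) * (f (moveFn η x y) - f η))
  + ∑ x, ω x * ((η x : ℝ) * (1 + θ x) * (f (remFn η x) - f η)
      + θ x * (α x + η x) * (f (addFn η x) - f η))

/-- One-site Meixner duality function at density `0`:
`d_{a,0}(m,n) = (n!/(n-m)!) (Γ(a)/Γ(a+m)) 1{m ≤ n}`. -/
def dualD0 (a : ℝ) (m n : ℕ) : ℝ :=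
  if m ≤ n then (Nat.descFactorial n m : ℝ) * (Real.Gamma a / Real.Gamma (a + m)) else 0

/-- One-site Meixner duality function at density `ϱ`. -/
def dualD (a ϱ : ℝ) (m n : ℕ) : ℝ :=
  ∑ l ∈ Finset.range (m + 1), (Nat.choose m l : ℝ) * dualD0 a l n * (-ϱ) ^ (m - l)

/-- The orthogonal duality function `D_{α,ϱ}(ξ,η)`. -/
def dualityFn (α : V → ℝ) (ϱ : ℝ) {k : ℕ} (ξ : Config V k) (η : V → ℕ) : ℝ :=
  ∏ x, dualD (α x) ϱ (ξ.1 x) (η x)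

/-- The polynomial `F_{α,ϱ}^ψ` associated to `ψ : Ξ_k → ℝ`. -/
def liftF (α : V → ℝ) (ϱ : ℝ) {k : ℕ} (ψ : Config V k → ℝ) (η : V → ℕ) : ℝ :=
  ∑ ξ : Config V k, sipMeasure α ξ * ψ ξ * dualityFn α ϱ ξ η

end Defs


end

noncomputable section

set_option linter.unusedSectionVars false

namespace SIPexpAux

open NormedSpace

variable {ι : Type*} [Fintype ι] [DecidableEq ι]

lemma continuous_entry (v : ι → ℝ) (i : ι) :
    Continuous (fun M : Matrix ι ι ℝ => M.mulVec v i) := by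
  simp only [Matrix.mulVec, dotProduct]
  exact continuous_finset_sum _ fun j _ =>
    (by fun_prop)

/-- evaluation of `mulVec` as a continuous linear map. -/
def entryCLM (v : ι → ℝ) (i : ι) : Matrix ι ι ℝ →L[ℝ] ℝ where
  toFun M := M.mulVec v i
  map_add' M N := by simp [Matrix.add_mulVec]
  map_smul' c M := by simp [Matrix.smul_mulVec]
  cont := continuous_entry v i

/-- evaluation of `mulVec` as an `AddMonoidHom`. -/
def entryHom (v : ι → ℝ) (i : ι) : Matrix ι ι ℝ →+ ℝ where
  toFun M := M.mulVec v i
  map_zero' := by simp [Matrix.mulVec]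
  map_add' M N := by simp [Matrix.add_mulVec]

lemma exp_mulVec_apply (M : Matrix ι ι ℝ) (v : ι → ℝ) (i : ι) :
    (exp M).mulVec v i = ∑' (n : ℕ), ((Nat.factorial n : ℝ)⁻¹) • ((M ^ n).mulVec v i) := by
  letI : SeminormedRing (Matrix ι ι ℝ) := Matrix.linftyOpSemiNormedRing
  letI : NormedRing (Matrix ι ι ℝ) := Matrix.linftyOpNormedRing
  letI : NormedAlgebra ℝ (Matrix ι ι ℝ) := Matrix.linftyOpNormedAlgebra
  have hsum : Summable (fun n : ℕ => ((Nat.factorial n : ℝ)⁻¹) • M ^ n) := expSeries_summable' M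
  have h2 := (hsum.hasSum.map (entryHom v i) (continuous_entry v i)).tsum_eq
  rw [exp_eq_tsum ℝ]
  show (entryHom v i) (∑' (n : ℕ), ((Nat.factorial n : ℝ)⁻¹) • M ^ n) = _
  rw [← h2]
  refine tsum_congr fun n => ?_
  simp [entryHom, Matrix.smul_mulVec]

lemma exp_mulVec_one (M : Matrix ι ι ℝ) (h : M.mulVec (fun _ => (1 : ℝ)) = 0) (i : ι) :
    (exp M).mulVec (fun _ => (1 : ℝ)) i = 1 := by
  have hpow : ∀ n : ℕ, n ≠ 0 → (M ^ n).mulVec (fun _ => (1 : ℝ)) = 0 := by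
    intro n hn
    induction n with
    | zero => exact absurd rfl hn
    | succ m ih =>
      rw [pow_succ, ← Matrix.mulVec_mulVec, h, Matrix.mulVec_zero]
  rw [exp_mulVec_apply]
  rw [tsum_eq_single 0 (fun n hn => by rw [hpow n hn]; simp)]
  simp [Matrix.one_mulVec]

lemma exp_mulVec_const (M : Matrix ι ι ℝ) (h : M.mulVec (fun _ => (1 : ℝ)) = 0) (a : ℝ)
    (i : ι) : (exp M).mulVec (fun _ => a) i = a := by
  have : (fun _ : ι => a) = a • (fun _ : ι => (1 : ℝ)) := by funext z; simp
  rw [this, Matrix.mulVec_smul]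
  simp [exp_mulVec_one M h i]

lemma pow_entry_nonneg {M : Matrix ι ι ℝ} (h : ∀ p q, 0 ≤ M p q) (n : ℕ) (p q : ι) :
    0 ≤ (M ^ n) p q := by
  induction n generalizing p q with
  | zero => by_cases hpq : p = q <;> simp [pow_zero, Matrix.one_apply, hpq]
  | succ m ih =>
    rw [pow_succ, Matrix.mul_apply]
    exact Finset.sum_nonneg fun j _ => mul_nonneg (ih p j) (h j q)

lemma exp_entry_nonneg_of_nonneg {M : Matrix ι ι ℝ} (h : ∀ p q, 0 ≤ M p q) (p q : ι) :
    0 ≤ exp M p q := by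
  have hv : ∀ N : Matrix ι ι ℝ, N.mulVec (Pi.single q (1 : ℝ)) p = N p q := by
    intro N
    simp [Matrix.mulVec, dotProduct, Pi.single_apply]
  rw [← hv (exp M), exp_mulVec_apply]
  refine tsum_nonneg fun n => ?_
  rw [hv]
  exact smul_nonneg (by positivity) (pow_entry_nonneg h n p q)

lemma exp_entry_nonneg {M : Matrix ι ι ℝ} (h : ∀ p q, p ≠ q → 0 ≤ M p q) (p q : ι) :
    0 ≤ exp M p q := by
  letI : SeminormedRing (Matrix ι ι ℝ) := Matrix.linftyOpSemiNormedRing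
  letI : NormedRing (Matrix ι ι ℝ) := Matrix.linftyOpNormedRing
  letI : NormedAlgebra ℝ (Matrix ι ι ℝ) := Matrix.linftyOpNormedAlgebra
  have hne : (Finset.univ : Finset ι).Nonempty := ⟨p, Finset.mem_univ p⟩
  set l : ℝ := Finset.univ.sup' hne (fun i => -M i i) with hl
  set N : Matrix ι ι ℝ := M + l • 1 with hN
  have hNpos : ∀ i j, 0 ≤ N i j := by
    intro i j
    by_cases hij : i = j
    · subst hij
      have : -M i i ≤ l := Finset.le_sup' (fun i => -M i i) (Finset.mem_univ i)
      simp only [hN, Matrix.add_apply, Matrix.smul_apply, Matrix.one_apply_eq, smul_eq_mul,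
        mul_one]
      linarith
    · simp only [hN, Matrix.add_apply, Matrix.smul_apply, Matrix.one_apply_ne hij, smul_eq_mul,
        mul_zero, add_zero]
      exact h i j hij
  have hM : M = (-l) • (1 : Matrix ι ι ℝ) + N := by
    rw [hN]; module
  have hcomm : Commute ((-l) • (1 : Matrix ι ι ℝ)) N := (Commute.one_left N).smul_left (-l)
  have hsplit : exp M = exp ((-l) • (1 : Matrix ι ι ℝ)) * exp N := by
    rw [hM]; exact Matrix.exp_add_of_commute _ _ hcomm
  have hdiag : exp ((-l) • (1 : Matrix ι ι ℝ)) = Real.exp (-l) • (1 : Matrix ι ι ℝ) := by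
    rw [Matrix.smul_one_eq_diagonal, Matrix.exp_diagonal, Pi.exp_def, Matrix.smul_one_eq_diagonal]
    congr 1
    funext i
    rw [← Real.exp_eq_exp_ℝ]
  rw [hsplit, hdiag, Matrix.smul_mul, Matrix.one_mul, Matrix.smul_apply, smul_eq_mul]
  exact mul_nonneg (Real.exp_nonneg _) (exp_entry_nonneg_of_nonneg hNpos p q)

lemma mulVec_mono {P : Matrix ι ι ℝ} (hP : ∀ i j, 0 ≤ P i j) {u v : ι → ℝ}
    (huv : ∀ j, u j ≤ v j) (i : ι) : P.mulVec u i ≤ P.mulVec v i :=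
  Finset.sum_le_sum fun j _ => mul_le_mul_of_nonneg_left (huv j) (hP i j)

lemma hasDerivAt_exp_mulVec (M : Matrix ι ι ℝ) (v : ι → ℝ) (i : ι) (s : ℝ) :
    HasDerivAt (fun u : ℝ => (exp (u • M)).mulVec v i)
      ((exp (s • M)).mulVec (M.mulVec v) i) s := by
  letI : SeminormedRing (Matrix ι ι ℝ) := Matrix.linftyOpSemiNormedRing
  letI : NormedRing (Matrix ι ι ℝ) := Matrix.linftyOpNormedRing
  letI : NormedAlgebra ℝ (Matrix ι ι ℝ) := Matrix.linftyOpNormedAlgebra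
  have hd : HasDerivAt (fun u : ℝ => exp (u • M)) (exp (s • M) * M) s :=
    hasDerivAt_exp_smul_const M s
  have hcomp := ((entryCLM v i).hasFDerivAt.comp_hasDerivAt s hd)
  have heq : (entryCLM v i) (exp (s • M) * M) = (exp (s • M)).mulVec (M.mulVec v) i := by
    show (exp (s • M) * M).mulVec v i = _
    rw [← Matrix.mulVec_mulVec]
  rw [← heq]
  exact hcomp

end SIPexpAux

end

set_option linter.unusedSectionVars false

noncomputable section

namespace SIPgen

open NormedSpace

variable {V : Type*} [Fintype V] [DecidableEq V] {k : ℕ}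

/-- Generic jump-type generator matrix. -/
def genMat (g : Config V k → V → V → ℝ) : Matrix (Config V k) (Config V k) ℝ :=
  fun η ζ => ∑ x, ∑ y, g η x y *
    ((if η.move x y = ζ then 1 else 0) - (if ζ = η then 1 else 0))

lemma genMat_mulVec (g : Config V k → V → V → ℝ) (f : Config V k → ℝ) (η : Config V k) :
    (genMat g).mulVec f η = ∑ x, ∑ y, g η x y * (f (η.move x y) - f η) := by
  unfold genMat Matrix.mulVec dotProduct
  simp_rw [Finset.sum_mul]
  rw [Finset.sum_comm]
  refine Finset.sum_congr rfl fun x _ => ?_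
  rw [Finset.sum_comm]
  refine Finset.sum_congr rfl fun y _ => ?_
  have hterm : ∀ ζ : Config V k,
      g η x y * ((if η.move x y = ζ then (1:ℝ) else 0) - (if ζ = η then 1 else 0)) * f ζ
      = g η x y * ((if η.move x y = ζ then f ζ else 0) - (if ζ = η then f ζ else 0)) := by
    intro ζ
    split_ifs <;> ring
  rw [Finset.sum_congr rfl fun ζ _ => hterm ζ, ← Finset.mul_sum]
  rw [Finset.sum_sub_distrib, Finset.sum_ite_eq, Finset.sum_ite_eq']
  simp

lemma genMat_mulVec_one (g : Config V k → V → V → ℝ) :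
    (genMat g).mulVec (fun _ => (1 : ℝ)) = 0 := by
  funext η
  rw [genMat_mulVec]
  simp

lemma genMat_offdiag_nonneg (g : Config V k → V → V → ℝ)
    (hg : ∀ η x y, 0 ≤ g η x y) {η ζ : Config V k} (hne : ζ ≠ η) :
    0 ≤ genMat g η ζ := by
  refine Finset.sum_nonneg fun x _ => Finset.sum_nonneg fun y _ => ?_
  rw [if_neg hne, sub_zero]
  exact mul_nonneg (hg η x y) (by positivity)

lemma rwPart_eq (c : V → V → ℝ) (β : V → ℝ) :
    rwPartMatrix c β k = genMat (fun η x y => c x y * η.1 x * β y) := rfl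

lemma clump_eq (c : V → V → ℝ) :
    clumpMatrix c k = genMat (fun η x y => c x y * η.1 x * η.1 y) := rfl

lemma sip_decomp (c : V → V → ℝ) (β : V → ℝ) (ε : ℝ) :
    sipMatrix c (fun x => ε * β x) k = ε • rwPartMatrix c β k + clumpMatrix c k := by
  funext η ζ
  simp only [sipMatrix, rwPartMatrix, clumpMatrix, Matrix.add_apply, Matrix.smul_apply,
    smul_eq_mul, Finset.mul_sum, ← Finset.sum_add_distrib]
  refine Finset.sum_congr rfl fun x _ => Finset.sum_congr rfl fun y _ => ?_
  ring

end SIPgen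

noncomputable section

namespace SIPgen

variable {V : Type*} [Fintype V] [DecidableEq V] {k : ℕ}

/-- The Lyapunov function: sum of squares of occupation numbers. -/
def phiC (ζ : Config V k) : ℝ := ∑ x, (ζ.1 x : ℝ) ^ 2

lemma phiC_nonneg (ζ : Config V k) : 0 ≤ phiC ζ :=
  Finset.sum_nonneg fun x _ => by positivity

lemma phiC_le (ζ : Config V k) : phiC ζ ≤ (Fintype.card V : ℝ) * (k : ℝ) ^ 2 := by
  have h : ∀ x : V, (ζ.1 x : ℝ) ^ 2 ≤ (k : ℝ) ^ 2 := by
    intro x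
    have := ζ.apply_le x
    have h1 : (ζ.1 x : ℝ) ≤ (k : ℝ) := by exact_mod_cast this
    have h0 : (0:ℝ) ≤ (ζ.1 x : ℝ) := by positivity
    nlinarith
  calc phiC ζ ≤ ∑ _x : V, (k : ℝ) ^ 2 := Finset.sum_le_sum fun x _ => h x
    _ = (Fintype.card V : ℝ) * (k : ℝ) ^ 2 := by
        simp [Finset.sum_const, Finset.card_univ, nsmul_eq_mul]

lemma phiC_move (ζ : Config V k) (x y : V) (hx : ζ.1 x ≠ 0) (hxy : x ≠ y) :
    phiC (ζ.move x y) - phiC ζ = 2 * (ζ.1 y : ℝ) - 2 * (ζ.1 x : ℝ) + 2 := by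
  have hmv : (ζ.move x y).1 = fun z => ζ.1 z - (if z = x then 1 else 0) + (if z = y then 1 else 0) := by
    unfold Config.move
    exact congrArg Subtype.val (dif_neg hx)
  have h1 : (ζ.move x y).1 x = ζ.1 x - 1 := by
    rw [hmv]; simp [hxy]
  have h2 : (ζ.move x y).1 y = ζ.1 y + 1 := by
    rw [hmv]; simp [Ne.symm hxy]
  have h3 : ∀ z, z ≠ x → z ≠ y → (ζ.move x y).1 z = ζ.1 z := by
    intro z hzx hzy
    rw [hmv]; simp [hzx, hzy]
  have hsub : phiC (ζ.move x y) - phiC ζ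
      = ∑ z, (((ζ.move x y).1 z : ℝ) ^ 2 - (ζ.1 z : ℝ) ^ 2) := by
    rw [phiC, phiC, Finset.sum_sub_distrib]
  rw [hsub]
  have hset : ∑ z, (((ζ.move x y).1 z : ℝ) ^ 2 - (ζ.1 z : ℝ) ^ 2)
      = ∑ z ∈ ({x, y} : Finset V), (((ζ.move x y).1 z : ℝ) ^ 2 - (ζ.1 z : ℝ) ^ 2) := by
    symm
    refine Finset.sum_subset (Finset.subset_univ _) ?_
    intro z _ hz
    simp only [Finset.mem_insert, Finset.mem_singleton, not_or] at hz
    rw [h3 z hz.1 hz.2]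
    ring
  rw [hset, Finset.sum_insert (by simp [hxy]), Finset.sum_singleton, h1, h2]
  have hx1 : (1:ℕ) ≤ ζ.1 x := Nat.one_le_iff_ne_zero.2 hx
  have hcast1 : ((ζ.1 x - 1 : ℕ) : ℝ) = (ζ.1 x : ℝ) - 1 := by
    push_cast [hx1]; ring
  rw [hcast1]
  push_cast
  ring

lemma clump_mulVec_phi (c : V → V → ℝ) (hsymm : ∀ x y, c x y = c y x)
    (hloop : ∀ x, c x x = 0) (ζ : Config V k) :
    (clumpMatrix c k).mulVec phiC ζ = ∑ x, ∑ y, 2 * (c x y * (ζ.1 x : ℝ) * (ζ.1 y : ℝ)) := by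
  rw [clump_eq, genMat_mulVec]
  set G : V → V → ℝ := fun x y => c x y * (ζ.1 x : ℝ) * (ζ.1 y : ℝ) * (phiC (ζ.move x y) - phiC ζ)
    with hG
  have hpair : ∀ x y, G x y + G y x = 4 * (c x y * (ζ.1 x : ℝ) * (ζ.1 y : ℝ)) := by
    intro x y
    by_cases hzero : c x y * (ζ.1 x : ℝ) * (ζ.1 y : ℝ) = 0
    · have hzero' : c y x * (ζ.1 y : ℝ) * (ζ.1 x : ℝ) = 0 := by
        rw [← hsymm x y]; linear_combination hzero
      have gx : G x y = 0 := by
        show c x y * (ζ.1 x : ℝ) * (ζ.1 y : ℝ) * _ = 0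
        rw [hzero, zero_mul]
      have gy : G y x = 0 := by
        show c y x * (ζ.1 y : ℝ) * (ζ.1 x : ℝ) * _ = 0
        rw [hzero', zero_mul]
      rw [gx, gy, hzero]; ring
    · have hc : c x y ≠ 0 := by
        intro h0; exact hzero (by rw [h0]; ring)
      have hx : ζ.1 x ≠ 0 := by
        intro h0; exact hzero (by rw [h0]; push_cast; ring)
      have hy : ζ.1 y ≠ 0 := by
        intro h0; exact hzero (by rw [h0]; push_cast; ring)
      have hxy : x ≠ y := by
        rintro rfl
        exact hc (hloop x)
      show c x y * (ζ.1 x : ℝ) * (ζ.1 y : ℝ) * _ + c y x * (ζ.1 y : ℝ) * (ζ.1 x : ℝ) * _ = _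
      rw [phiC_move ζ x y hx hxy, phiC_move ζ y x hy (Ne.symm hxy), hsymm y x]
      ring
  have hswap : (∑ x, ∑ y, G y x) = ∑ x, ∑ y, G x y := Finset.sum_comm
  have hdouble : (∑ x, ∑ y, G x y) + (∑ x, ∑ y, G x y)
      = ∑ x, ∑ y, 4 * (c x y * (ζ.1 x : ℝ) * (ζ.1 y : ℝ)) := by
    nth_rewrite 2 [← hswap]
    rw [← Finset.sum_add_distrib]
    refine Finset.sum_congr rfl fun x _ => ?_
    rw [← Finset.sum_add_distrib]
    exact Finset.sum_congr rfl fun y _ => hpair x y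
  have h4 : ∑ x, ∑ y, 4 * (c x y * (ζ.1 x : ℝ) * (ζ.1 y : ℝ))
      = 2 * ∑ x, ∑ y, 2 * (c x y * (ζ.1 x : ℝ) * (ζ.1 y : ℝ)) := by
    rw [Finset.mul_sum]
    refine Finset.sum_congr rfl fun x _ => ?_
    rw [Finset.mul_sum]
    refine Finset.sum_congr rfl fun y _ => ?_
    ring
  show (∑ x, ∑ y, G x y) = _
  linarith [hdouble, h4]

lemma clump_mulVec_phi_pos (c : V → V → ℝ) (hsymm : ∀ x y, c x y = c y x)
    (hloop : ∀ x, c x x = 0) (hnonneg : ∀ x y, 0 ≤ c x y) (ζ : Config V k)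
    (h : ¬ inOmega c ζ) : 0 < (clumpMatrix c k).mulVec phiC ζ := by
  rw [clump_mulVec_phi c hsymm hloop]
  rw [inOmega] at h
  push_neg at h
  obtain ⟨x₀, y₀, hxy₀⟩ := h
  have hterm : ∀ x y : V, 0 ≤ 2 * (c x y * (ζ.1 x : ℝ) * (ζ.1 y : ℝ)) := by
    intro x y
    have := hnonneg x y
    positivity
  refine Finset.sum_pos' (fun x _ => Finset.sum_nonneg fun y _ => hterm x y) ⟨x₀, Finset.mem_univ x₀, ?_⟩
  refine Finset.sum_pos' (fun y _ => hterm x₀ y) ⟨y₀, Finset.mem_univ y₀, ?_⟩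
  have := hterm x₀ y₀
  rcases lt_or_eq_of_le this with h' | h'
  · exact h'
  · exact absurd (by linarith : c x₀ y₀ * (ζ.1 x₀ : ℝ) * (ζ.1 y₀ : ℝ) = 0) hxy₀

lemma clump_mulVec_zero_of_omega (c : V → V → ℝ) (f : Config V k → ℝ) (ζ : Config V k)
    (h : inOmega c ζ) : (clumpMatrix c k).mulVec f ζ = 0 := by
  rw [clump_eq, genMat_mulVec]
  refine Finset.sum_eq_zero fun x _ => Finset.sum_eq_zero fun y _ => ?_
  rw [h x y, zero_mul]

end SIPgen

noncomputable section

namespace SIPgen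

variable {V : Type*} [Fintype V] [DecidableEq V] {k : ℕ}

/-- Indicator of the complement of the absorbing set. -/
def indC (c : V → V → ℝ) : Config V k → ℝ := fun ζ => if inOmega c ζ then 0 else 1

lemma indC_nonneg (c : V → V → ℝ) (ζ : Config V k) : 0 ≤ indC c ζ := by
  unfold indC; split_ifs <;> norm_num

lemma indC_le_one (c : V → V → ℝ) (ζ : Config V k) : indC c ζ ≤ 1 := by
  unfold indC; split_ifs <;> norm_num

lemma clump_mulVec_indC_nonpos (c : V → V → ℝ) (hnonneg : ∀ x y, 0 ≤ c x y)
    (ζ : Config V k) : (clumpMatrix c k).mulVec (indC c) ζ ≤ 0 := by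
  by_cases h : inOmega c ζ
  · rw [clump_mulVec_zero_of_omega c _ ζ h]
  · rw [clump_eq, genMat_mulVec]
    refine Finset.sum_nonpos fun x _ => Finset.sum_nonpos fun y _ => ?_
    have h1 : indC c (ζ.move x y) - indC c ζ ≤ 0 := by
      rw [show indC c ζ = 1 from if_neg h]
      have := indC_le_one c (ζ.move x y)
      linarith
    have h2 : (0:ℝ) ≤ c x y * (ζ.1 x : ℝ) * (ζ.1 y : ℝ) := by
      have := hnonneg x y; positivity
    exact mul_nonpos_of_nonneg_of_nonpos h2 h1

lemma rw_mulVec_phi_lower (c : V → V → ℝ) (β : V → ℝ) (hnonneg : ∀ x y, 0 ≤ c x y)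
    (hβ : ∀ x, 0 < β x) (ζ : Config V k) :
    -(∑ x, ∑ y, c x y * (k : ℝ) * β y * ((Fintype.card V : ℝ) * (k : ℝ) ^ 2))
      ≤ (rwPartMatrix c β k).mulVec phiC ζ := by
  rw [rwPart_eq, genMat_mulVec, ← Finset.sum_neg_distrib]
  refine Finset.sum_le_sum fun x _ => ?_
  rw [← Finset.sum_neg_distrib]
  refine Finset.sum_le_sum fun y _ => ?_
  set M : ℝ := (Fintype.card V : ℝ) * (k : ℝ) ^ 2 with hM
  have hM0 : 0 ≤ M := by positivity
  have ha : (0:ℝ) ≤ c x y * (ζ.1 x : ℝ) * β y := by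
    have := hnonneg x y; have := (hβ y).le; positivity
  have haA : c x y * (ζ.1 x : ℝ) * β y ≤ c x y * (k : ℝ) * β y := by
    have hzk : (ζ.1 x : ℝ) ≤ (k : ℝ) := by exact_mod_cast ζ.apply_le x
    exact mul_le_mul_of_nonneg_right
      (mul_le_mul_of_nonneg_left hzk (hnonneg x y)) (hβ y).le
  have hd : -M ≤ phiC (ζ.move x y) - phiC ζ := by
    have := phiC_nonneg (ζ.move x y)
    have := phiC_le ζ
    rw [hM]; linarith
  calc -(c x y * (k : ℝ) * β y * M) ≤ -((c x y * (ζ.1 x : ℝ) * β y) * M) := by nlinarith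
    _ ≤ c x y * (ζ.1 x : ℝ) * β y * (phiC (ζ.move x y) - phiC ζ) := by nlinarith

lemma rw_mulVec_indC_upper (c : V → V → ℝ) (β : V → ℝ) (hnonneg : ∀ x y, 0 ≤ c x y)
    (hβ : ∀ x, 0 < β x) (ζ : Config V k) :
    (rwPartMatrix c β k).mulVec (indC c) ζ ≤ ∑ x, ∑ y, c x y * (k : ℝ) * β y := by
  rw [rwPart_eq, genMat_mulVec]
  refine Finset.sum_le_sum fun x _ => ?_
  refine Finset.sum_le_sum fun y _ => ?_
  have ha : (0:ℝ) ≤ c x y * (ζ.1 x : ℝ) * β y := by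
    have := hnonneg x y; have := (hβ y).le; positivity
  have haA : c x y * (ζ.1 x : ℝ) * β y ≤ c x y * (k : ℝ) * β y := by
    have hzk : (ζ.1 x : ℝ) ≤ (k : ℝ) := by exact_mod_cast ζ.apply_le x
    exact mul_le_mul_of_nonneg_right
      (mul_le_mul_of_nonneg_left hzk (hnonneg x y)) (hβ y).le
  have hd : indC c (ζ.move x y) - indC c ζ ≤ 1 := by
    have := indC_le_one c (ζ.move x y)
    have := indC_nonneg c ζ
    linarith
  nlinarith

end SIPgen

noncomputable section

namespace SIPgen

open NormedSpace SIPexpAux Filter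

variable {V : Type*} [Fintype V] [DecidableEq V]

lemma tendsto_exp_comb (c : V → V → ℝ) (β : V → ℝ)
    (hsymm : ∀ x y, c x y = c y x) (hnonneg : ∀ x y, 0 ≤ c x y)
    (hloop : ∀ x, c x x = 0) (hβ : ∀ x, 0 < β x) (k : ℕ) (η : Config V k)
    (t : ℝ) (ht : 0 < t) :
    Filter.Tendsto
      (fun r : ℝ =>
        (exp (t • rwPartMatrix c β k + r • clumpMatrix c k)).mulVec
          (fun ζ => if inOmega c ζ then 1 else 0) η)
      Filter.atTop (nhds 1) := by
  classical
  set A := rwPartMatrix c β k with hAdef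
  set B := clumpMatrix c k with hBdef
  have hA1 : A.mulVec (fun _ => (1:ℝ)) = 0 := by rw [hAdef, rwPart_eq]; exact genMat_mulVec_one _
  have hB1 : B.mulVec (fun _ => (1:ℝ)) = 0 := by rw [hBdef, clump_eq]; exact genMat_mulVec_one _
  have hG1 : ∀ r : ℝ, (t • A + r • B).mulVec (fun _ => (1:ℝ)) = 0 := by
    intro r
    rw [Matrix.add_mulVec, Matrix.smul_mulVec, Matrix.smul_mulVec, hA1, hB1]
    simp
  have hsG1 : ∀ r s : ℝ, (s • (t • A + r • B)).mulVec (fun _ => (1:ℝ)) = 0 := by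
    intro r s
    rw [Matrix.smul_mulVec, hG1 r]
    simp
  have hoff : ∀ r : ℝ, 0 ≤ r → ∀ s : ℝ, 0 ≤ s → ∀ p q : Config V k, p ≠ q →
      0 ≤ (s • (t • A + r • B)) p q := by
    intro r hr s hs p q hpq
    have hApq : 0 ≤ A p q := by
      rw [hAdef, rwPart_eq]
      exact genMat_offdiag_nonneg _
        (fun η' x y => by have := hnonneg x y; have := (hβ y).le; positivity) (Ne.symm hpq)
    have hBpq : 0 ≤ B p q := by
      rw [hBdef, clump_eq]
      exact genMat_offdiag_nonneg _
        (fun η' x y => by have := hnonneg x y; positivity) (Ne.symm hpq)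
    have hval : (s • (t • A + r • B)) p q = s * (t * A p q + r * B p q) := by
      simp [Matrix.add_apply, Matrix.smul_apply]
    rw [hval]
    have := ht.le
    positivity
  have hexp_pos : ∀ r : ℝ, 0 ≤ r → ∀ s : ℝ, 0 ≤ s → ∀ p q : Config V k,
      0 ≤ (exp (s • (t • A + r • B))) p q := fun r hr s hs p q =>
    exp_entry_nonneg (fun p' q' h' => hoff r hr s hs p' q' h') p q
  by_cases hall : ∀ ζ : Config V k, inOmega c ζ
  · have hfun : (fun ζ : Config V k => if inOmega c ζ then (1:ℝ) else 0) = (fun _ => 1) := by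
      funext ζ; rw [if_pos (hall ζ)]
    rw [hfun]
    have hconst : ∀ r : ℝ, (exp (t • A + r • B)).mulVec (fun _ => (1:ℝ)) η = 1 := by
      intro r; exact exp_mulVec_one _ (hG1 r) η
    simp only [hconst]
    exact tendsto_const_nhds
  push_neg at hall
  obtain ⟨ζ₀, hζ₀⟩ := hall
  -- constants
  set MΦ : ℝ := (Fintype.card V : ℝ) * (k : ℝ) ^ 2 with hMΦ
  have hMΦ0 : 0 ≤ MΦ := by positivity
  set CA : ℝ := t * (∑ x, ∑ y, c x y * (k : ℝ) * β y * MΦ) with hCAdef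
  set C₂ : ℝ := t * (∑ x, ∑ y, c x y * (k : ℝ) * β y) with hC2def
  have hsum0 : (0:ℝ) ≤ ∑ x, ∑ y, c x y * (k : ℝ) * β y :=
    Finset.sum_nonneg fun x _ => Finset.sum_nonneg fun y _ => by
      have := hnonneg x y; have := (hβ y).le; positivity
  have hsum0' : (0:ℝ) ≤ ∑ x, ∑ y, c x y * (k : ℝ) * β y * MΦ :=
    Finset.sum_nonneg fun x _ => Finset.sum_nonneg fun y _ => by
      have := hnonneg x y; have := (hβ y).le; positivity
  have hC20 : 0 ≤ C₂ := mul_nonneg ht.le hsum0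
  have hCA0 : 0 ≤ CA := mul_nonneg ht.le hsum0'
  set Ωc : Finset (Config V k) := Finset.univ.filter (fun ζ => ¬ inOmega c ζ) with hΩcdef
  have hΩcne : Ωc.Nonempty := ⟨ζ₀, by simp [hΩcdef, hζ₀]⟩
  set δ : ℝ := Ωc.inf' hΩcne (fun ζ => B.mulVec phiC ζ) with hδdef
  have hδpos : 0 < δ := by
    rw [hδdef, Finset.lt_inf'_iff]
    intro ζ hζ
    rw [hΩcdef, Finset.mem_filter] at hζ
    exact clump_mulVec_phi_pos c hsymm hloop hnonneg ζ hζ.2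
  have hδle : ∀ ζ : Config V k, ¬ inOmega c ζ → δ ≤ B.mulVec phiC ζ := fun ζ h =>
    Finset.inf'_le _ (by rw [hΩcdef, Finset.mem_filter]; exact ⟨Finset.mem_univ ζ, h⟩)
  -- pointwise generator bounds
  have hGφ : ∀ r : ℝ, 0 ≤ r → ∀ ζ : Config V k,
      r * δ * indC c ζ - CA ≤ (t • A + r • B).mulVec phiC ζ := by
    intro r hr ζ
    have hval : (t • A + r • B).mulVec phiC ζ = t * A.mulVec phiC ζ + r * B.mulVec phiC ζ := by
      rw [Matrix.add_mulVec, Matrix.smul_mulVec, Matrix.smul_mulVec]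
      simp
    rw [hval]
    have hAφ := rw_mulVec_phi_lower c β hnonneg hβ (k := k) ζ
    have h1 : -CA ≤ t * A.mulVec phiC ζ := by
      have h2 := mul_le_mul_of_nonneg_left hAφ ht.le
      rw [← hAdef] at h2
      rw [hCAdef, hMΦ]
      linarith [h2]
    by_cases hζ : inOmega c ζ
    · have hBz : B.mulVec phiC ζ = 0 := clump_mulVec_zero_of_omega c _ ζ hζ
      have hIz : indC c ζ = 0 := if_pos hζ
      rw [hBz, hIz]
      linarith
    · have h2 : δ ≤ B.mulVec phiC ζ := hδle ζ hζ
      have hIz : indC c ζ = 1 := if_neg hζ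
      rw [hIz, mul_one]
      have h3 := mul_le_mul_of_nonneg_left h2 hr
      linarith
  have hGind : ∀ r : ℝ, 0 ≤ r → ∀ ζ : Config V k,
      (t • A + r • B).mulVec (indC c) ζ ≤ C₂ := by
    intro r hr ζ
    have hval : (t • A + r • B).mulVec (indC c) ζ
        = t * A.mulVec (indC c) ζ + r * B.mulVec (indC c) ζ := by
      rw [Matrix.add_mulVec, Matrix.smul_mulVec, Matrix.smul_mulVec]
      simp
    rw [hval]
    have h1 := rw_mulVec_indC_upper c β hnonneg hβ (k := k) ζ
    have h2 := clump_mulVec_indC_nonpos c hnonneg (k := k) ζ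
    have h3 := mul_le_mul_of_nonneg_left h1 ht.le
    rw [← hAdef] at h3
    rw [← hBdef] at h2
    have h4 : r * B.mulVec (indC c) ζ ≤ 0 := mul_nonpos_of_nonneg_of_nonpos hr h2
    rw [hC2def]
    linarith
  -- the key quantitative estimate
  have key : ∀ r : ℝ, 1 ≤ r → ∀ h : ℝ, 0 < h → h ≤ 1 →
      (exp (t • A + r • B)).mulVec (indC c) η
        ≤ MΦ / (r * δ * h) + CA / (r * δ) + C₂ * h / 2 := by
    intro r hr h hh0 hh1
    have hr0 : (0:ℝ) ≤ r := by linarith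
    set G := t • A + r • B with hGdef
    set Q : ℝ → ℝ := fun s => (exp (s • G)).mulVec (indC c) η with hQdef
    set W : ℝ → ℝ := fun s => (exp (s • G)).mulVec phiC η with hWdef
    have hQ' : ∀ s : ℝ, HasDerivAt Q ((exp (s • G)).mulVec (G.mulVec (indC c)) η) s :=
      fun s => hasDerivAt_exp_mulVec G (indC c) η s
    have hW' : ∀ s : ℝ, HasDerivAt W ((exp (s • G)).mulVec (G.mulVec phiC) η) s :=
      fun s => hasDerivAt_exp_mulVec G phiC η s
    -- derivative of Q bounded by C₂
    have hQd_le : ∀ s : ℝ, 0 ≤ s → (exp (s • G)).mulVec (G.mulVec (indC c)) η ≤ C₂ := by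
      intro s hs
      calc (exp (s • G)).mulVec (G.mulVec (indC c)) η
          ≤ (exp (s • G)).mulVec (fun _ => C₂) η :=
            mulVec_mono (hexp_pos r hr0 s hs) (fun ζ => hGind r hr0 ζ) η
        _ = C₂ := exp_mulVec_const _ (hsG1 r s) C₂ η
    -- Q s - s * C₂ is antitone on [0, ∞)
    have hanti : AntitoneOn (fun s => Q s - s * C₂) (Set.Ici (0:ℝ)) := by
      have hdiff : Differentiable ℝ (fun s => Q s - s * C₂) :=
        fun s => ((hQ' s).sub (hasDerivAt_mul_const C₂)).differentiableAt
      refine antitoneOn_of_deriv_nonpos (convex_Ici 0) hdiff.continuous.continuousOn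
        hdiff.differentiableOn ?_
      intro s hs
      rw [interior_Ici] at hs
      rw [show deriv (fun s => Q s - s * C₂) s = _ from ((hQ' s).sub (hasDerivAt_mul_const C₂)).deriv]
      have := hQd_le s (le_of_lt hs)
      linarith
    have stepA : ∀ s : ℝ, 0 ≤ s → s ≤ 1 → Q 1 - C₂ * (1 - s) ≤ Q s := by
      intro s h0s hs1
      have := hanti (Set.mem_Ici.2 h0s) (Set.mem_Ici.2 (zero_le_one)) hs1
      simp only at this
      linarith
    -- W bounds
    have hW1 : W 1 ≤ MΦ := by
      calc W 1 ≤ (exp ((1:ℝ) • G)).mulVec (fun _ => MΦ) η :=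
            mulVec_mono (hexp_pos r hr0 1 zero_le_one) (fun ζ => phiC_le ζ) η
        _ = MΦ := exp_mulVec_const _ (hsG1 r 1) MΦ η
    have hWnn : ∀ s : ℝ, 0 ≤ s → 0 ≤ W s := by
      intro s hs
      have h0 : (exp (s • G)).mulVec (fun _ => (0:ℝ)) η ≤ W s :=
        mulVec_mono (hexp_pos r hr0 s hs) (fun ζ => phiC_nonneg ζ) η
      have hz : (exp (s • G)).mulVec (fun _ => (0:ℝ)) η = 0 := by
        rw [show (fun _ : Config V k => (0:ℝ)) = (0 : Config V k → ℝ) from rfl,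
          Matrix.mulVec_zero]
        rfl
      linarith
    -- lower bound on derivative of W
    have hWd_ge : ∀ s : ℝ, 1 - h ≤ s → s ≤ 1 →
        r * δ * Q 1 - C₂ * r * δ * (1 - s) - CA
          ≤ (exp (s • G)).mulVec (G.mulVec phiC) η := by
      intro s h1s hs1
      have h0s : (0:ℝ) ≤ s := by linarith
      have hmono : (exp (s • G)).mulVec (fun ζ => r * δ * indC c ζ - CA) η
          ≤ (exp (s • G)).mulVec (G.mulVec phiC) η :=
        mulVec_mono (hexp_pos r hr0 s h0s) (fun ζ => hGφ r hr0 ζ) η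
      have hlin : (exp (s • G)).mulVec (fun ζ => r * δ * indC c ζ - CA) η
          = r * δ * Q s - CA := by
        have hveq : (fun ζ : Config V k => r * δ * indC c ζ - CA)
            = (r * δ) • indC c + (fun _ => -CA) := by
          funext ζ
          simp only [Pi.add_apply, Pi.smul_apply, smul_eq_mul]
          ring
        rw [hveq, Matrix.mulVec_add, Pi.add_apply, Matrix.mulVec_smul,
          exp_mulVec_const _ (hsG1 r s) (-CA) η]
        simp only [Pi.smul_apply, smul_eq_mul]
        rw [hQdef]
        ring
      have hQs := stepA s h0s hs1
      have h5 := mul_le_mul_of_nonneg_left hQs (by positivity : (0:ℝ) ≤ r * δ)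
      calc r * δ * Q 1 - C₂ * r * δ * (1 - s) - CA
          = r * δ * (Q 1 - C₂ * (1 - s)) - CA := by ring
        _ ≤ r * δ * Q s - CA := by linarith
        _ = (exp (s • G)).mulVec (fun ζ => r * δ * indC c ζ - CA) η := hlin.symm
        _ ≤ _ := hmono
    -- the comparison function ψ
    set ψ : ℝ → ℝ := fun s => W s - s * (r * δ * Q 1) - C₂ * r * δ / 2 * (1 - s) ^ 2 + s * CA
      with hψdef
    have hψ' : ∀ s : ℝ, HasDerivAt ψ
        ((exp (s • G)).mulVec (G.mulVec phiC) η - r * δ * Q 1 + C₂ * r * δ * (1 - s) + CA)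
        s := by
      intro s
      have d1 := hW' s
      have d2 : HasDerivAt (fun u : ℝ => u * (r * δ * Q 1)) (r * δ * Q 1) s :=
        hasDerivAt_mul_const _
      have d4 : HasDerivAt (fun u : ℝ => u * CA) CA s := hasDerivAt_mul_const _
      have h4 : HasDerivAt (fun u : ℝ => (1:ℝ) - u) (-1) s := by
        simpa using (hasDerivAt_id s).const_sub 1
      have h5 := h4.pow 2
      have h6 := h5.const_mul (C₂ * r * δ / 2)
      have hfin := ((d1.sub d2).sub h6).add d4
      have hfin' : HasDerivAt ψ _ s := hfin
      convert hfin' using 1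
      push_cast
      ring
    have hmon : MonotoneOn ψ (Set.Icc (1 - h) 1) := by
      have hdiff : Differentiable ℝ ψ := fun s => (hψ' s).differentiableAt
      refine monotoneOn_of_deriv_nonneg (convex_Icc _ _) hdiff.continuous.continuousOn
        hdiff.differentiableOn ?_
      intro s hs
      rw [interior_Icc] at hs
      obtain ⟨hs1, hs2⟩ := hs
      rw [(hψ' s).deriv]
      have hWd := hWd_ge s (le_of_lt hs1) (le_of_lt hs2)
      linarith
    have hψle : ψ (1 - h) ≤ ψ 1 := by
      refine hmon ?_ ?_ (by linarith)
      · exact Set.mem_Icc.2 ⟨le_refl _, by linarith⟩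
      · exact Set.mem_Icc.2 ⟨by linarith, le_refl _⟩
    have hWnn' : 0 ≤ W (1 - h) := hWnn (1 - h) (by linarith)
    have hmain : r * δ * Q 1 * h ≤ MΦ + CA * h + C₂ * r * δ / 2 * h ^ 2 := by
      simp only [hψdef] at hψle
      nlinarith [hψle, hW1, hWnn']
    -- conclude by dividing
    have hQ1eq : (exp (t • A + r • B)).mulVec (indC c) η = Q 1 := by
      rw [hQdef]
      simp only [one_smul]
      rfl
    rw [hQ1eq]
    have hpos : (0:ℝ) < r * δ * h := by positivity
    have hS : (MΦ / (r * δ * h) + CA / (r * δ) + C₂ * h / 2) * (r * δ * h)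
        = MΦ + CA * h + C₂ * r * δ / 2 * h ^ 2 := by
      field_simp <;> ring
    have h7 : Q 1 * (r * δ * h) ≤ (MΦ / (r * δ * h) + CA / (r * δ) + C₂ * h / 2) * (r * δ * h) := by
      rw [hS]
      calc Q 1 * (r * δ * h) = r * δ * Q 1 * h := by ring
        _ ≤ _ := hmain
    exact le_of_mul_le_mul_right h7 hpos
  -- nonnegativity of the target quantity
  set q : ℝ → ℝ := fun r => (exp (t • A + r • B)).mulVec (indC c) η with hqdef
  have hq0 : ∀ r : ℝ, 0 ≤ r → 0 ≤ q r := by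
    intro r hr
    have hps : ∀ p p' : Config V k, 0 ≤ (exp (t • A + r • B)) p p' := by
      intro p p'
      have := hexp_pos r hr 1 zero_le_one p p'
      rwa [one_smul] at this
    have h0 : (exp (t • A + r • B)).mulVec (fun _ => (0:ℝ)) η ≤ q r :=
      mulVec_mono hps (fun ζ => indC_nonneg c ζ) η
    have hz : (exp (t • A + r • B)).mulVec (fun _ => (0:ℝ)) η = 0 := by
      rw [show (fun _ : Config V k => (0:ℝ)) = (0 : Config V k → ℝ) from rfl, Matrix.mulVec_zero]
      rfl
    linarith
  -- squeeze
  have hsqrt : Tendsto Real.sqrt atTop atTop := by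
    apply Filter.tendsto_atTop_atTop.2
    intro b
    refine ⟨max (b ^ 2) 0, fun a ha => ?_⟩
    have h0 : (0:ℝ) ≤ a := le_trans (le_max_right _ _) ha
    have h1 : b ^ 2 ≤ a := le_trans (le_max_left _ _) ha
    calc b ≤ |b| := le_abs_self b
      _ = Real.sqrt (b ^ 2) := (Real.sqrt_sq_eq_abs b).symm
      _ ≤ Real.sqrt a := Real.sqrt_le_sqrt h1
  have hbzero : Tendsto
      (fun r : ℝ => MΦ / δ * (Real.sqrt r)⁻¹ + CA / δ * r⁻¹ + C₂ / 2 * (Real.sqrt r)⁻¹)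
      atTop (nhds 0) := by
    have t1 : Tendsto (fun r : ℝ => (Real.sqrt r)⁻¹) atTop (nhds 0) :=
      hsqrt.inv_tendsto_atTop
    have t2 : Tendsto (fun r : ℝ => r⁻¹) atTop (nhds (0:ℝ)) := tendsto_inv_atTop_zero
    have := ((t1.const_mul (MΦ / δ)).add (t2.const_mul (CA / δ))).add (t1.const_mul (C₂ / 2))
    simpa using this
  have hq_le : ∀ᶠ r in atTop, q r ≤
      MΦ / δ * (Real.sqrt r)⁻¹ + CA / δ * r⁻¹ + C₂ / 2 * (Real.sqrt r)⁻¹ := by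
    filter_upwards [eventually_ge_atTop (1:ℝ)] with r hr
    have hr0 : (0:ℝ) < r := by linarith
    have hsr1 : 1 ≤ Real.sqrt r := Real.one_le_sqrt.2 hr
    have hsr0 : 0 < Real.sqrt r := by linarith
    have hh0 : 0 < (Real.sqrt r)⁻¹ := by positivity
    have hh1 : (Real.sqrt r)⁻¹ ≤ 1 := by
      rw [inv_le_one_iff₀]; right; exact hsr1
    have hk := key r hr ((Real.sqrt r)⁻¹) hh0 hh1
    have hrs : Real.sqrt r * Real.sqrt r = r := Real.mul_self_sqrt hr0.le
    have hδ0 : δ ≠ 0 := ne_of_gt hδpos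
    have hr0' : r ≠ 0 := ne_of_gt hr0
    have hs0 : Real.sqrt r ≠ 0 := ne_of_gt hsr0
    have h9 : r * δ * (Real.sqrt r)⁻¹ = δ * Real.sqrt r := by
      apply mul_right_cancel₀ hs0
      calc r * δ * (Real.sqrt r)⁻¹ * Real.sqrt r
          = r * δ * ((Real.sqrt r)⁻¹ * Real.sqrt r) := by ring
        _ = r * δ := by rw [inv_mul_cancel₀ hs0]; ring
        _ = δ * Real.sqrt r * Real.sqrt r := by rw [mul_assoc δ, hrs]; ring
    have e1 : MΦ / (r * δ * (Real.sqrt r)⁻¹) = MΦ / δ * (Real.sqrt r)⁻¹ := by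
      rw [h9, div_mul_eq_div_div, div_eq_mul_inv]
    have e2 : CA / (r * δ) = CA / δ * r⁻¹ := by
      rw [mul_comm r δ, div_mul_eq_div_div, div_eq_mul_inv]
    have e3 : C₂ * (Real.sqrt r)⁻¹ / 2 = C₂ / 2 * (Real.sqrt r)⁻¹ := by ring
    linarith [hk]
  have hqz : Tendsto q atTop (nhds 0) :=
    squeeze_zero'
      (by filter_upwards [eventually_ge_atTop (0:ℝ)] with r hr; exact hq0 r hr)
      hq_le hbzero
  have hsplit : ∀ r : ℝ,
      (exp (t • A + r • B)).mulVec (fun ζ => if inOmega c ζ then (1:ℝ) else 0) η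
        = 1 - q r := by
    intro r
    have hfΩ : (fun ζ : Config V k => if inOmega c ζ then (1:ℝ) else 0)
        = (fun _ => (1:ℝ)) - indC c := by
      funext ζ
      by_cases hζ : inOmega c ζ <;> simp [indC, hζ]
    rw [hfΩ, Matrix.mulVec_sub, Pi.sub_apply, exp_mulVec_one _ (hG1 r) η]
  simp only [hsplit]
  have hfin := (tendsto_const_nhds :
    Filter.Tendsto (fun _ : ℝ => (1:ℝ)) Filter.atTop (nhds 1)).sub hqz
  rw [sub_zero] at hfin
  exact hfin

end SIPgen


theorem accelerated_sip_in_absorbing_set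
    {V : Type*} [Fintype V] [DecidableEq V] (c : V → V → ℝ) (β : V → ℝ)
    (hsymm : ∀ x y, c x y = c y x) (hnonneg : ∀ x y, 0 ≤ c x y)
    (hloop : ∀ x, c x x = 0) (hconn : (graphOf c).Connected)
    (hβ : ∀ x, 0 < β x) (k : ℕ) (hk : 2 ≤ k) (η : Config V k) (t : ℝ) (ht : 0 < t) :
    Filter.Tendsto
      (fun ε : ℝ =>
        (NormedSpace.exp ((t * ε⁻¹) • sipMatrix c (fun x => ε * β x) k)).mulVec
          (fun ζ => if inOmega c ζ then 1 else 0) η)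
      (nhdsWithin 0 (Set.Ioi 0)) (nhds 1) := by
  classical
  have hmap : Filter.Tendsto (fun ε : ℝ => t * ε⁻¹) (nhdsWithin 0 (Set.Ioi 0))
      Filter.atTop := by
    have h1 : Filter.Tendsto (fun ε : ℝ => ε⁻¹) (nhdsWithin 0 (Set.Ioi 0)) Filter.atTop :=
      tendsto_inv_nhdsGT_zero
    exact h1.const_mul_atTop ht
  have hmain := (SIPgen.tendsto_exp_comb c β hsymm hnonneg hloop hβ k η t ht).comp hmap
  refine Filter.Tendsto.congr' ?_ hmain
  filter_upwards [self_mem_nhdsWithin] with ε hε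
  have hε0 : ε ≠ 0 := ne_of_gt hε
  have hmat : t • rwPartMatrix c β k + (t * ε⁻¹) • clumpMatrix c k
      = (t * ε⁻¹) • sipMatrix c (fun x => ε * β x) k := by
    rw [SIPgen.sip_decomp c β ε, smul_add, smul_smul]
    have hte : t * ε⁻¹ * ε = t := by field_simp
    rw [hte]
  simp only [Function.comp_apply]
  rw [hmat]
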